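/- Let S ∈ (ℝ^d × {−1,1})^* be a finite multiset of labeled points whose points are in general position, and suppose there exists (a*, w) ∈ ℝ^d × ℝ such that ⟨a*, x⟩ ≥ w for all (x,1) ∈ S and ⟨a*, x⟩ < w for all (x,−1) ∈ S. Define the dual constraint multiset S_w = {(y·x, y·w) : (x,y) ∈ S}. If a point a ∈ ℝ^d satisfies depth_{S_w}(a) ≥ (1−α)|S| (i.e., ⟨y·x, a⟩ ≥ y·w for at least (1−α)|S| of the pairs), then val_S(hs_{a,w}) ≥ (1−α)|S| − d; i.e., the halfspace hs_{a,w} correctly classifies all but at most α|S| + d of the labeled points. -/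
import Mathlib


open scoped Classical

/-- Number of constraints `(u, v)` in `T` satisfied by `x`, i.e. with `⟨u, x⟩ ≥ v`. -/
noncomputable def depth {d : ℕ} (T : Multiset ((Fin d → ℝ) × ℝ)) (x : Fin d → ℝ) : ℕ :=
  (T.filter (fun p => p.2 ≤ ∑ j, p.1 j * x j)).card

/-- `val S a w` : the number of labeled points in `S` correctly classified by the
halfspace `hs_{a,w}` (label `1` requires `⟨a,x⟩ ≥ w`, label `-1` requires `⟨a,x⟩ < w`). -/
noncomputable def val {d : ℕ} (S : Multiset ((Fin d → ℝ) × ℝ)) (a : Fin d → ℝ) (w : ℝ) : ℕ :=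
  (S.filter (fun p => (p.2 = 1 ∧ w ≤ ∑ j, a j * p.1 j) ∨
    (p.2 = -1 ∧ ∑ j, a j * p.1 j < w))).card

lemma card_filter_or' {α : Type*} (s : Multiset α) (p q : α → Prop)
    [DecidablePred p] [DecidablePred q] :
    Multiset.card (s.filter (fun a => p a ∨ q a)) ≤
      Multiset.card (s.filter p) + Multiset.card (s.filter q) := by
  have h := congrArg Multiset.card (Multiset.filter_add_filter p q s)
  simp only [Multiset.card_add] at h
  omega

/-- A deep point of the dual constraint multiset yields a good halfspace: if the points
of `S` are in general position and `a ≠ 0` has dual depth at least `(1-α)|S|`, then the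
halfspace `hs_{a,w}` correctly classifies at least `(1-α)|S| - d` points of `S`. -/
theorem stmt_12 {d : ℕ} (S : Multiset ((Fin d → ℝ) × ℝ))
    (hlabels : ∀ p ∈ S, p.2 = 1 ∨ p.2 = -1)
    (hgp : ∀ T : Multiset (Fin d → ℝ), T ≤ S.map Prod.fst → T.card = d + 1 →
      ¬ ∃ (u : Fin d → ℝ) (v : ℝ), u ≠ 0 ∧ ∀ x ∈ T, ∑ j, u j * x j = v)
    (w : ℝ)
    (hsep : ∃ astar : Fin d → ℝ, ∀ p ∈ S,
      (p.2 = 1 → w ≤ ∑ j, astar j * p.1 j) ∧ (p.2 = -1 → ∑ j, astar j * p.1 j < w))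
    (a : Fin d → ℝ) (ha : a ≠ 0) (α : ℝ)
    (hdeep : (1 - α) * (S.card : ℝ) ≤
      (depth (S.map (fun p => (p.2 • p.1, p.2 * w))) a : ℝ)) :
    (1 - α) * (S.card : ℝ) - d ≤ (val S a w : ℝ) := by
  classical
  set Q : ((Fin d → ℝ) × ℝ) → Prop := fun p =>
    (p.2 = 1 ∧ w ≤ ∑ j, a j * p.1 j) ∨ (p.2 = -1 ∧ ∑ j, a j * p.1 j < w) with hQ
  set R : ((Fin d → ℝ) × ℝ) → Prop := fun p => ∑ j, a j * p.1 j = w with hR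
  set B : ((Fin d → ℝ) × ℝ) → Prop := fun p => ¬(p.2 = 1 ∨ p.2 = -1) with hB
  -- the exceptional set has size at most d
  have hE : (S.filter R).card ≤ d := by
    by_contra h
    push_neg at h
    have hle : d + 1 ≤ Multiset.card ((S.filter R).map Prod.fst) := by
      simpa using h
    obtain ⟨T, hT⟩ : ∃ T, T ∈ Multiset.powersetCard (d + 1) ((S.filter R).map Prod.fst) := by
      rw [← Multiset.card_pos_iff_exists_mem, Multiset.card_powersetCard]
      exact Nat.choose_pos hle
    rw [Multiset.mem_powersetCard] at hT
    refine hgp T (hT.1.trans (Multiset.map_le_map (Multiset.filter_le _ _))) hT.2 ⟨a, w, ha, ?_⟩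
    intro x hx
    have hx' := Multiset.mem_of_le hT.1 hx
    obtain ⟨p, hp, rfl⟩ := Multiset.mem_map.mp hx'
    exact (Multiset.mem_filter.mp hp).2
  have hBnil : S.filter B = 0 := by
    rw [Multiset.filter_eq_nil]
    intro p hp
    exact not_not.mpr (hlabels p hp)
  -- depth is at most val + |exceptional|
  have hdepth_le : depth (S.map (fun p => (p.2 • p.1, p.2 * w))) a ≤
      val S a w + (S.filter R).card := by
    unfold depth val
    rw [Multiset.filter_map]
    rw [Multiset.card_map]
    have hmono : (S.filter ((fun p : ((Fin d → ℝ) × ℝ) => p.2 ≤ ∑ j, p.1 j * a j) ∘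
        (fun p => (p.2 • p.1, p.2 * w)))) ≤ S.filter (fun p => Q p ∨ (R p ∨ B p)) := by
      apply Multiset.monotone_filter_right
      intro p hcond
      simp only [Function.comp] at hcond
      by_cases hlab : p.2 = 1 ∨ p.2 = -1
      · have hsum : ∑ j, (p.2 • p.1) j * a j = p.2 * ∑ j, a j * p.1 j := by
          rw [Finset.mul_sum]
          exact Finset.sum_congr rfl fun j _ => by simp [Pi.smul_apply, smul_eq_mul]; ring
        rw [hsum] at hcond
        rcases hlab with h1 | h1
        · exact Or.inl (Or.inl ⟨h1, by rw [h1] at hcond; linarith⟩)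
        · rw [h1] at hcond
          have hle : ∑ j, a j * p.1 j ≤ w := by linarith
          rcases lt_or_eq_of_le hle with hlt | heq
          · exact Or.inl (Or.inr ⟨h1, hlt⟩)
          · exact Or.inr (Or.inl heq)
      · exact Or.inr (Or.inr hlab)
    calc Multiset.card (S.filter ((fun p : ((Fin d → ℝ) × ℝ) => p.2 ≤ ∑ j, p.1 j * a j) ∘
            (fun p => (p.2 • p.1, p.2 * w))))
        ≤ Multiset.card (S.filter (fun p => Q p ∨ (R p ∨ B p))) := Multiset.card_le_card hmono
      _ ≤ Multiset.card (S.filter Q) + Multiset.card (S.filter (fun p => R p ∨ B p)) :=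
          card_filter_or' _ _ _
      _ ≤ Multiset.card (S.filter Q) +
            (Multiset.card (S.filter R) + Multiset.card (S.filter B)) :=
          Nat.add_le_add_left (card_filter_or' _ _ _) _
      _ = Multiset.card (S.filter Q) + Multiset.card (S.filter R) := by
          rw [hBnil]; simp
  have hfin : (depth (S.map (fun p => (p.2 • p.1, p.2 * w))) a : ℝ) ≤ (val S a w : ℝ) + d := by
    have h2 := hdepth_le.trans (Nat.add_le_add_left hE _)
    exact_mod_cast h2
  linarith
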